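/- arXiv:2605.06973 — 7 statements merged into one kernel-verified Lean document; each statement's English description precedes it below -/
import Mathlib

section
/- For every positive definite Hermitian matrix σ and every matrix X on a finite-dimensional complex Hilbert space, T_σ([X, σ]) = [X, log σ], where T_σ(Y) = ∫₀^∞ (σ + s·1)⁻¹ Y (σ + s·1)⁻¹ ds and [A,B] = AB − BA. -/
open Matrix MeasureTheory
open scoped ComplexOrder

/-- `T_σ(X) = ∫₀^∞ (σ + s·1)⁻¹ X (σ + s·1)⁻¹ ds`, defined entrywise. -/
noncomputable def Tmap {n : ℕ} (σ X : Matrix (Fin n) (Fin n) ℂ) : Matrix (Fin n) (Fin n) ℂ :=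
  Matrix.of fun i j =>
    ∫ s in Set.Ioi (0 : ℝ),
      ((σ + (s : ℂ) • (1 : Matrix (Fin n) (Fin n) ℂ))⁻¹ * X
        * (σ + (s : ℂ) • (1 : Matrix (Fin n) (Fin n) ℂ))⁻¹) i j

/-- Matrix logarithm of a Hermitian matrix via the continuous functional calculus. -/
noncomputable def mlog {n : ℕ} (M : Matrix (Fin n) (Fin n) ℂ) : Matrix (Fin n) (Fin n) ℂ :=
  cfc Real.log M

/-
Since `[X, σ] = [X, σ + s]`, the integrand is `R_s X - X R_s` with `R_s = (σ + s)⁻¹`, which is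
also the commutator `[X, (1 + s)⁻¹ - R_s]`: subtracting the scalar `(1 + s)⁻¹` changes nothing
but makes `(1 + s)⁻¹ - R_s` itself integrable. In an eigenbasis of `σ`, `(1 + s)⁻¹ - R_s` is
diagonal with entries `(1 + s)⁻¹ - (λ + s)⁻¹`, whose integral over `(0, ∞)` is `log λ`; so
`(1 + s)⁻¹ - R_s` integrates to `log σ`.
-/

open Set Filter Topology

lemma hasDerivAt_log_one_add_sub_log_add {x s : ℝ} (hx : 0 < x) (hs : 0 ≤ s) :
    HasDerivAt (fun t => Real.log (1 + t) - Real.log (x + t)) ((1 + s)⁻¹ - (x + s)⁻¹) s := by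
  have h1 := ((hasDerivAt_id' s).const_add 1).log (by positivity)
  have h2 := ((hasDerivAt_id' s).const_add x).log (by positivity)
  simpa only [one_div] using h1.fun_sub h2

lemma tendsto_log_one_add_sub_log_add {x : ℝ} (hx : 0 < x) :
    Tendsto (fun t => Real.log (1 + t) - Real.log (x + t)) atTop (𝓝 0) := by
  have hratio : Tendsto (fun t => (1 + t) / (x + t)) atTop (𝓝 1) := by
    have hinv : Tendsto (fun t : ℝ => (x + t)⁻¹) atTop (𝓝 0) :=
      (tendsto_atTop_add_const_left atTop x tendsto_id).inv_tendsto_atTop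
    have h := (hinv.const_mul (1 - x)).const_add 1
    rw [mul_zero, add_zero] at h
    refine h.congr' ?_
    filter_upwards [eventually_gt_atTop 0] with t ht
    field_simp
    ring
  have := (Real.continuousAt_log one_ne_zero).tendsto.comp hratio
  rw [Real.log_one] at this
  refine this.congr' ?_
  filter_upwards [eventually_gt_atTop 0] with t ht
  exact Real.log_div (by positivity) (by positivity)

lemma integral_Ioi_inv_one_add_sub_inv_add {x : ℝ} (hx : 0 < x) :
    IntegrableOn (fun s => (1 + s)⁻¹ - (x + s)⁻¹) (Ioi 0) ∧
      ∫ s in Ioi 0, ((1 + s)⁻¹ - (x + s)⁻¹) = Real.log x := by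
  have hderiv := fun s (hs : s ∈ Ici (0 : ℝ)) => hasDerivAt_log_one_add_sub_log_add hx hs
  have hlim := tendsto_log_one_add_sub_log_add hx
  have hvalue : (0 : ℝ) - (Real.log (1 + 0) - Real.log (x + 0)) = Real.log x := by simp
  rcases le_total 1 x with h1x | hx1
  · have hnonneg : ∀ s ∈ Ioi (0 : ℝ), 0 ≤ (1 + s)⁻¹ - (x + s)⁻¹ := fun s hs =>
      sub_nonneg.2 (inv_anti₀ (by linarith [mem_Ioi.1 hs]) (by linarith))
    exact ⟨integrableOn_Ioi_deriv_of_nonneg' hderiv hnonneg hlim,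
      (integral_Ioi_of_hasDerivAt_of_nonneg' hderiv hnonneg hlim).trans hvalue⟩
  · have hnonpos : ∀ s ∈ Ioi (0 : ℝ), (1 + s)⁻¹ - (x + s)⁻¹ ≤ 0 := fun s hs =>
      sub_nonpos.2 (inv_anti₀ (by linarith [mem_Ioi.1 hs]) (by linarith))
    exact ⟨integrableOn_Ioi_deriv_of_nonpos' hderiv hnonpos hlim,
      (integral_Ioi_of_hasDerivAt_of_nonpos' hderiv hnonpos hlim).trans hvalue⟩

lemma mul_commutator_mul_of_mul_eq_one {R : Type*} [Ring R] {a b : R} (hab : a * b = 1)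
    (hba : b * a = 1) (x : R) : b * (x * a - a * x) * b = b * x - x * b := by
  simp only [mul_sub, sub_mul, mul_assoc, hab, mul_one]
  simp only [← mul_assoc, hba, one_mul]

namespace Matrix

variable {n 𝕜 : Type*} [Fintype n] [DecidableEq n] [RCLike 𝕜] {A : Matrix n n 𝕜}

lemma IsHermitian.cfc_apply_eq_sum (hA : A.IsHermitian) (f : ℝ → ℝ) (i j : n) :
    cfc f A i j = ∑ k, (hA.eigenvectorUnitary : Matrix n n 𝕜) i k * (f (hA.eigenvalues k) : 𝕜) *
      star ((hA.eigenvectorUnitary : Matrix n n 𝕜) j k) := by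
  simp [hA.cfc_eq, IsHermitian.cfc, mul_apply, diagonal_apply]

lemma IsHermitian.integral_cfc_apply {α : Type*} [MeasurableSpace α] {μ : Measure α}
    (hA : A.IsHermitian) {f : α → ℝ → ℝ} {F : ℝ → ℝ}
    (hf : ∀ k, Integrable (fun a => f a (hA.eigenvalues k)) μ)
    (hF : ∀ k, ∫ a, f a (hA.eigenvalues k) ∂μ = F (hA.eigenvalues k)) (i j : n) :
    Integrable (fun a => cfc (f a) A i j) μ ∧ ∫ a, cfc (f a) A i j ∂μ = cfc F A i j := by
  simp only [hA.cfc_apply_eq_sum]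
  have hterm : ∀ k, Integrable (fun a => (hA.eigenvectorUnitary : Matrix n n 𝕜) i k *
      (f a (hA.eigenvalues k) : 𝕜) * star ((hA.eigenvectorUnitary : Matrix n n 𝕜) j k)) μ :=
    fun k => (((hf k).ofReal).const_mul _).mul_const _
  refine ⟨integrable_finsetSum _ fun k _ => hterm k, ?_⟩
  rw [integral_finsetSum _ fun k _ => hterm k]
  refine Finset.sum_congr rfl fun k _ => ?_
  rw [integral_mul_const, integral_const_mul, integral_ofReal, hF]

omit [DecidableEq n] in
lemma integral_commutator_apply {α : Type*} [MeasurableSpace α] {μ : Measure α}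
    {B : α → Matrix n n 𝕜} {L : Matrix n n 𝕜} (hB : ∀ i j, Integrable (fun a => B a i j) μ)
    (hL : ∀ i j, ∫ a, B a i j ∂μ = L i j) (X : Matrix n n 𝕜) (i j : n) :
    ∫ a, (X * B a - B a * X) i j ∂μ = (X * L - L * X) i j := by
  have hleft : ∀ k, Integrable (fun a => X i k * B a k j) μ := fun k => (hB k j).const_mul _
  have hright : ∀ k, Integrable (fun a => B a i k * X k j) μ := fun k => (hB i k).mul_const _
  simp only [sub_apply, mul_apply]
  rw [integral_sub (integrable_finsetSum _ fun k _ => hleft k)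
      (integrable_finsetSum _ fun k _ => hright k),
    integral_finsetSum _ fun k _ => hleft k, integral_finsetSum _ fun k _ => hright k]
  simp only [integral_const_mul, integral_mul_const, hL]

lemma PosDef.inv_add_smul_one_eq_cfc (hA : A.PosDef) {s : ℝ} (hs : 0 ≤ s) :
    (A + (s : 𝕜) • 1)⁻¹ = cfc (fun x => (x + s)⁻¹) A := by
  have hspec : ∀ x ∈ spectrum ℝ A, x + s ≠ 0 := by
    rw [hA.isHermitian.spectrum_real_eq_range_eigenvalues]
    rintro _ ⟨k, rfl⟩
    exact (add_pos_of_pos_of_nonneg (hA.eigenvalues_pos k) hs).ne'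
  have : IsSelfAdjoint A := hA.isHermitian
  rw [cfc_inv (fun x => x + s) A hspec, cfc_add_const s (fun x => x) A, cfc_id' ℝ A,
    nonsing_inv_eq_ringInverse, Algebra.algebraMap_eq_smul_one,
    RCLike.real_smul_eq_coe_smul (K := 𝕜)]

lemma PosDef.inv_add_smul_one_mul_commutator_mul (hA : A.PosDef) {s : ℝ} (hs : 0 ≤ s)
    (c : ℝ) (X : Matrix n n 𝕜) :
    (A + (s : 𝕜) • 1)⁻¹ * (X * A - A * X) * (A + (s : 𝕜) • 1)⁻¹ =
      X * cfc (fun x => c - (x + s)⁻¹) A - cfc (fun x => c - (x + s)⁻¹) A * X := by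
  have hunit : IsUnit (A + (s : 𝕜) • 1) := by
    rw [← RCLike.real_smul_eq_coe_smul]
    exact (hA.add_posSemidef (PosSemidef.one.smul hs)).isUnit
  have hshift : X * A - A * X = X * (A + (s : 𝕜) • 1) - (A + (s : 𝕜) • 1) * X := by
    simp only [mul_add, add_mul, mul_smul_comm, smul_mul_assoc, mul_one, one_mul]
    abel
  have : IsSelfAdjoint A := hA.isHermitian
  rw [hshift, mul_commutator_mul_of_mul_eq_one, cfc_sub (fun _ => c) (fun x => (x + s)⁻¹) A
      (hg := A.finite_real_spectrum.continuousOn _),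
    cfc_const c A, ← hA.inv_add_smul_one_eq_cfc hs, mul_sub, sub_mul, ← Algebra.commutes c X]
  · abel
  · rw [nonsing_inv_eq_ringInverse, Ring.mul_inverse_cancel _ hunit]
  · rw [nonsing_inv_eq_ringInverse, Ring.inverse_mul_cancel _ hunit]

end Matrix

theorem Tmap_commutator {n : ℕ} (σ X : Matrix (Fin n) (Fin n) ℂ) (hσ : σ.PosDef) :
    Tmap σ (X * σ - σ * X) = X * mlog σ - mlog σ * X := by
  have hlog := fun k => integral_Ioi_inv_one_add_sub_inv_add (hσ.eigenvalues_pos k)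
  have hentry := hσ.isHermitian.integral_cfc_apply (μ := volume.restrict (Ioi 0))
    (f := fun s x => (1 + s)⁻¹ - (x + s)⁻¹) (fun k => (hlog k).1) (fun k => (hlog k).2)
  ext i j
  calc Tmap σ (X * σ - σ * X) i j
      = ∫ s in Ioi 0, (X * cfc (fun x => (1 + s)⁻¹ - (x + s)⁻¹) σ
          - cfc (fun x => (1 + s)⁻¹ - (x + s)⁻¹) σ * X) i j :=
        setIntegral_congr_fun measurableSet_Ioi fun s hs =>
          congr_fun₂ (hσ.inv_add_smul_one_mul_commutator_mul (mem_Ioi.1 hs).le _ X) i j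
    _ = (X * mlog σ - mlog σ * X) i j :=
        integral_commutator_apply (fun i j => (hentry i j).1) (fun i j => (hentry i j).2) X i j
end

section
/- Let A be a self-adjoint operator on ℍ⊗ℍ satisfying the exchange-symmetry S·A·S = A, where S is the flip operator. For every density operator σ on ℍ, define A^σ := tr₂((1⊗σ)A). Then tr₂([A, σ⊗σ]) = [A^σ, σ]. -/
open Matrix Kronecker
open scoped ComplexOrder

/-- Partial trace over the second tensor factor, `tr₂(A ⊗ B) = tr(B)·A`. -/
noncomputable def ptrace2 {n : ℕ} (M : Matrix (Fin n × Fin n) (Fin n × Fin n) ℂ) :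
    Matrix (Fin n) (Fin n) ℂ :=
  Matrix.of fun i j => ∑ k : Fin n, M (i, k) (j, k)

/-- The flip (swap) operator `S : ψ⊗φ ↦ φ⊗ψ` as a matrix. -/
noncomputable def flipOp (n : ℕ) : Matrix (Fin n × Fin n) (Fin n × Fin n) ℂ :=
  Matrix.of fun p q => if p.1 = q.2 ∧ p.2 = q.1 then 1 else 0

lemma ite_sum_kill {n : ℕ} (i : Fin n) (f : Fin n → Fin n → ℂ) :
    (∑ a : Fin n, ∑ b : Fin n, if i = a then f a b else 0) = ∑ b : Fin n, f i b := by
  rw [Finset.sum_comm]; simp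

lemma triple_shift {n : ℕ} (f : Fin n → Fin n → Fin n → ℂ) :
    (∑ a : Fin n, ∑ b : Fin n, ∑ c : Fin n, f a b c)
      = ∑ c : Fin n, ∑ a : Fin n, ∑ b : Fin n, f a b c := by
  calc (∑ a : Fin n, ∑ b : Fin n, ∑ c : Fin n, f a b c)
      = ∑ a : Fin n, ∑ c : Fin n, ∑ b : Fin n, f a b c :=
        Finset.sum_congr rfl fun a _ => Finset.sum_comm
    _ = ∑ c : Fin n, ∑ a : Fin n, ∑ b : Fin n, f a b c := Finset.sum_comm

lemma ptrace2_left {n : ℕ} (A : Matrix (Fin n × Fin n) (Fin n × Fin n) ℂ)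
    (σ : Matrix (Fin n) (Fin n) ℂ) :
    ptrace2 (A * (σ ⊗ₖ σ)) = ptrace2 (((1 : Matrix (Fin n) (Fin n) ℂ) ⊗ₖ σ) * A) * σ := by
  ext i j
  simp only [ptrace2, Matrix.mul_apply, Matrix.of_apply, Matrix.kroneckerMap_apply,
    Matrix.one_apply, Fintype.sum_prod_type, ite_mul, one_mul, zero_mul,
    Finset.sum_mul, Finset.mul_sum, ite_sum_kill]
  rw [triple_shift (f := fun x x1 x3 => σ x1 x3 * A (i, x3) (x, x1) * σ x j)]
  exact Finset.sum_congr rfl fun a _ => Finset.sum_congr rfl fun b _ =>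
    Finset.sum_congr rfl fun c _ => by ring

lemma ptrace2_right {n : ℕ} (A : Matrix (Fin n × Fin n) (Fin n × Fin n) ℂ)
    (σ : Matrix (Fin n) (Fin n) ℂ) :
    ptrace2 ((σ ⊗ₖ σ) * A) = σ * ptrace2 (((1 : Matrix (Fin n) (Fin n) ℂ) ⊗ₖ σ) * A) := by
  ext i j
  simp only [ptrace2, Matrix.mul_apply, Matrix.of_apply, Matrix.kroneckerMap_apply,
    Matrix.one_apply, Fintype.sum_prod_type, ite_mul, one_mul, zero_mul,
    Finset.sum_mul, Finset.mul_sum, ite_sum_kill]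
  rw [Finset.sum_comm]
  exact Finset.sum_congr rfl fun a _ => Finset.sum_congr rfl fun b _ =>
    Finset.sum_congr rfl fun c _ => by ring

lemma ptrace2_sub {n : ℕ} (M N : Matrix (Fin n × Fin n) (Fin n × Fin n) ℂ) :
    ptrace2 (M - N) = ptrace2 M - ptrace2 N := by
  ext i j
  simp [ptrace2, Finset.sum_sub_distrib]

/-- For an exchange-symmetric self-adjoint two-body interaction `A` and a density operator `σ`,
`tr₂([A, σ⊗σ]) = [A^σ, σ]` where `A^σ = tr₂((1⊗σ)A)`. -/
theorem ptrace2_commutator {n : ℕ} (A : Matrix (Fin n × Fin n) (Fin n × Fin n) ℂ)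
    (hA : A.IsHermitian) (hsym : flipOp n * A * flipOp n = A)
    (σ : Matrix (Fin n) (Fin n) ℂ) (hσ : σ.PosSemidef) (htr : σ.trace = 1) :
    ptrace2 (A * (σ ⊗ₖ σ) - (σ ⊗ₖ σ) * A) =
      ptrace2 (((1 : Matrix (Fin n) (Fin n) ℂ) ⊗ₖ σ) * A) * σ
        - σ * ptrace2 (((1 : Matrix (Fin n) (Fin n) ℂ) ⊗ₖ σ) * A) := by
  rw [ptrace2_sub, ptrace2_left, ptrace2_right]
end

section
/- Let m_t solve the mean-field Lindblad equation dm_t/dt = −i[H̃ + A^{m_t}, m_t] + L m_t L† − (1/2){L†L, m_t} on [0,T] with m_0 positive definite. Then for all t ∈ [0,T], m_t is positive definite and its smallest eigenvalue satisfies λ_min(m_t) ≥ λ_min(m_0)·e^{−‖L‖² t}. -/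
open Matrix Kronecker
open scoped ComplexOrder

/-- The mean-field interaction `A^σ = tr₂((1⊗σ)A)`. -/
noncomputable def meanField {n : ℕ} (A : Matrix (Fin n × Fin n) (Fin n × Fin n) ℂ)
    (σ : Matrix (Fin n) (Fin n) ℂ) : Matrix (Fin n) (Fin n) ℂ :=
  ptrace2 (((1 : Matrix (Fin n) (Fin n) ℂ) ⊗ₖ σ) * A)

/-- Right-hand side of the mean-field Lindblad equation
`−i[H̃ + A^m, m] + L m L† − (1/2){L†L, m}`. -/
noncomputable def lindRHS {n : ℕ} (H L : Matrix (Fin n) (Fin n) ℂ)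
    (A : Matrix (Fin n × Fin n) (Fin n × Fin n) ℂ)
    (m : Matrix (Fin n) (Fin n) ℂ) : Matrix (Fin n) (Fin n) ℂ :=
  (-Complex.I) • ((H + meanField A m) * m - m * (H + meanField A m))
    + L * m * Lᴴ - (1 / 2 : ℂ) • (Lᴴ * L * m + m * (Lᴴ * L))

/-- The smallest eigenvalue of a Hermitian matrix (junk value `0` otherwise). -/
noncomputable def lamMin {n : ℕ} (M : Matrix (Fin n) (Fin n) ℂ) : ℝ :=
  if h : M.IsHermitian then ⨅ i, h.eigenvalues i else 0

/-- The operator norm (2→2 norm) of a matrix. -/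
noncomputable def opNorm {m : Type*} [Fintype m] [DecidableEq m] (M : Matrix m m ℂ) : ℝ :=
  ‖Matrix.toEuclideanCLM (𝕜 := ℂ) M‖

/-!
Write `u(t) = λ_min(m_t)` and compare it with `g(t) = a e^{-bt}` for `0 < a < λ_min(m_0)` and
`b > ‖L‖²`. If `u` first touches `g` at time `t`, take a unit eigenvector `x` of `m_t` for `u(t)`:
the Rayleigh quotient `q(s) = ⟨x, m_s x⟩` dominates `u`, agrees with it at `t`, and so
`q'(t) ≤ g'(t) = -b u(t)`. But at an eigenvector the commutator with `H̃ + A^{m_t}` drops out and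
`⟨x, ṁ_t x⟩ = ⟨L†x, m_t L†x⟩ - u(t) ‖Lx‖² ≥ -‖L‖² u(t)`, a contradiction. Hence `u > g` on
`[0, T]`; letting `a → λ_min(m_0)` and `b → ‖L‖²` gives the bound, which also keeps `m_t`
positive definite.
-/

open Set Filter Topology
open scoped InnerProductSpace

lemma OrthonormalBasis.mul_norm_sq_le_re_inner_apply {E ι : Type*} [NormedAddCommGroup E]
    [InnerProductSpace ℂ E] [Fintype ι] (b : OrthonormalBasis ι ℂ E) {T : E →L[ℂ] E}
    {μ : ι → ℝ} (hT : ∀ j, T (b j) = (μ j : ℂ) • b j) {r : ℝ} (hr : ∀ j, r ≤ μ j) (x : E) :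
    r * ‖x‖ ^ 2 ≤ (⟪x, T x⟫_ℂ).re := by
  have hTx : T x = ∑ j, (μ j * ⟪b j, x⟫_ℂ) • b j := by
    conv_lhs => rw [← b.sum_repr' x]
    simp only [map_sum, map_smul, hT, smul_smul, mul_comm]
  have hxTx : ⟪x, T x⟫_ℂ = ∑ j, ((μ j * ‖⟪b j, x⟫_ℂ‖ ^ 2 : ℝ) : ℂ) := by
    rw [hTx, inner_sum]
    refine Finset.sum_congr rfl fun j _ => ?_
    rw [inner_smul_right, ← inner_conj_symm x (b j), mul_assoc, Complex.mul_conj']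
    push_cast
    ring
  rw [hxTx, Complex.re_sum, ← b.sum_sq_norm_inner_right, Finset.mul_sum]
  refine Finset.sum_le_sum fun j _ => ?_
  simp only [Complex.ofReal_re]
  exact mul_le_mul_of_nonneg_right (hr j) (sq_nonneg _)

lemma re_inner_apply_of_apply_eq_smul {E : Type*} [NormedAddCommGroup E] [InnerProductSpace ℂ E]
    {T : E →L[ℂ] E} {x : E} (hx1 : ‖x‖ = 1) {μ : ℝ} (hx : T x = (μ : ℂ) • x) :
    (⟪x, T x⟫_ℂ).re = μ := by
  simp [hx, inner_self_eq_norm_sq_to_K, hx1]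

lemma HasDerivAt.re_inner_apply_apply {E : Type*} [NormedAddCommGroup E] [InnerProductSpace ℂ E]
    {f : ℝ → E →L[ℂ] E} {f' : E →L[ℂ] E} {t : ℝ} (hf : HasDerivAt f f' t) (x : E) :
    HasDerivAt (fun s => (⟪x, f s x⟫_ℂ).re) (⟪x, f' x⟫_ℂ).re t := by
  let quadForm : (E →L[ℂ] E) →L[ℝ] ℝ :=
    Complex.reCLM.comp (((innerSL ℂ x).comp (ContinuousLinearMap.apply ℂ E x)).restrictScalars ℝ)
  simpa [quadForm, Function.comp_def] using quadForm.hasFDerivAt.comp_hasDerivAt t hf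

section Lindbladian

variable {E : Type*} [NormedAddCommGroup E] [InnerProductSpace ℂ E] [CompleteSpace E]

noncomputable def lindbladian (K L M : E →L[ℂ] E) : E →L[ℂ] E :=
  (-Complex.I) • (K * M - M * K) + L * M * star L
    - (1 / 2 : ℂ) • (star L * L * M + M * (star L * L))

lemma inner_lindbladian_apply_of_apply_eq_smul {K L M : E →L[ℂ] E}
    (hM : (M : E →ₗ[ℂ] E).IsSymmetric) {x : E} {μ : ℝ} (hx : M x = (μ : ℂ) • x) :
    ⟪x, lindbladian K L M x⟫_ℂ = ⟪star L x, M (star L x)⟫_ℂ - ((μ * ‖L x‖ ^ 2 : ℝ) : ℂ) := by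
  have hMx : ∀ y, ⟪x, M y⟫_ℂ = μ * ⟪x, y⟫_ℂ := fun y => by
    rw [← ContinuousLinearMap.coe_coe, ← hM, ContinuousLinearMap.coe_coe, hx, inner_smul_left,
      Complex.conj_ofReal]
  have hxM : ∀ N : E →L[ℂ] E, ⟪x, N (M x)⟫_ℂ = μ * ⟪x, N x⟫_ℂ := fun N => by
    rw [hx, map_smul, inner_smul_right]
  have hLL : ⟪x, star L (L x)⟫_ℂ = ((‖L x‖ ^ 2 : ℝ) : ℂ) := by
    rw [ContinuousLinearMap.star_eq_adjoint, ContinuousLinearMap.adjoint_inner_right,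
      inner_self_eq_norm_sq_to_K]
    push_cast; rfl
  have hLML : ⟪x, L (M (star L x))⟫_ℂ = ⟪star L x, M (star L x)⟫_ℂ := by
    rw [ContinuousLinearMap.star_eq_adjoint, ContinuousLinearMap.adjoint_inner_left]
  simp only [lindbladian, _root_.add_apply, _root_.sub_apply, _root_.smul_apply, mul_apply_eq_comp,
    inner_add_right, inner_sub_right, inner_smul_right, hMx, hxM, hLML]
  rw [← mul_apply_eq_comp (star L) L, hxM, mul_apply_eq_comp, hLL]
  push_cast
  ring

lemma neg_mul_le_re_inner_lindbladian_apply {K L M : E →L[ℂ] E} (hM : M.IsPositive)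
    {x : E} (hx1 : ‖x‖ = 1) {μ : ℝ} (hx : M x = (μ : ℂ) • x) :
    -(‖L‖ ^ 2 * μ) ≤ (⟪x, lindbladian K L M x⟫_ℂ).re := by
  have hμ : 0 ≤ μ := re_inner_apply_of_apply_eq_smul hx1 hx ▸ hM.re_inner_nonneg_right x
  have hLx : ‖L x‖ ^ 2 ≤ ‖L‖ ^ 2 := by
    gcongr
    simpa [hx1] using L.le_opNorm x
  have hLMLpos : 0 ≤ (⟪star L x, M (star L x)⟫_ℂ).re := hM.re_inner_nonneg_right _
  rw [inner_lindbladian_apply_of_apply_eq_smul hM.isSymmetric hx, Complex.sub_re,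
    Complex.ofReal_re]
  nlinarith

end Lindbladian

theorem lt_on_Icc_of_contact_deriv_gt {u g g' : ℝ → ℝ} {a b : ℝ}
    (hu : ContinuousOn u (Icc a b)) (hg : ∀ t ∈ Icc a b, HasDerivAt g (g' t) t)
    (ha : g a < u a)
    (hcontact : ∀ t ∈ Ioc a b, u t = g t → ∃ q : ℝ → ℝ, ∃ q' : ℝ,
      HasDerivAt q q' t ∧ g' t < q' ∧ q t = u t ∧ ∀ s ∈ Ico a t, u s ≤ q s) :
    ∀ t ∈ Icc a b, g t < u t := by
  intro t₁ ht₁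
  by_contra! hle
  have hgc : ContinuousOn g (Icc a b) := fun t ht => (hg t ht).continuousAt.continuousWithinAt
  have hS : IsCompact {t ∈ Icc a b | u t - g t ≤ 0} :=
    isCompact_Icc.of_isClosed_subset
      ((hu.sub hgc).preimage_isClosed_of_isClosed isClosed_Icc isClosed_Iic) (sep_subset _ _)
  obtain ⟨t, ⟨htI, htle⟩, hmin⟩ := hS.exists_isLeast ⟨t₁, ht₁, by linarith⟩
  have hbefore : ∀ s ∈ Ico a t, g s < u s := fun s hs => by
    by_contra! h
    exact (hmin ⟨⟨hs.1, hs.2.le.trans htI.2⟩, by linarith⟩).not_gt hs.2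
  have hat : a < t := htI.1.lt_of_ne (by rintro rfl; linarith)
  have hut : u t = g t := by
    have := right_nhdsWithin_Ico_neBot hat
    have hlim : Tendsto (fun s => u s - g s) (𝓝[Ico a t] t) (𝓝 (u t - g t)) :=
      ((hu.sub hgc) t htI).mono (Ico_subset_Icc_self.trans (Icc_subset_Icc_right htI.2))
    have := ge_of_tendsto hlim (eventually_nhdsWithin_of_forall fun s hs =>
      (sub_pos.2 (hbefore s hs)).le)
    linarith
  obtain ⟨q, q', hq, hq', hqt, hqu⟩ := hcontact t ⟨hat, htI.2⟩ hut
  -- `q - g` vanishes at `t` and is positive just before it, so its derivative there is `≤ 0`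
  have hslope : q' - g' t ≤ 0 := by
    refine le_of_tendsto (hq.sub (hg t htI)).tendsto_slope_zero_left ?_
    filter_upwards [Ioo_mem_nhdsLT (sub_neg.2 hat)] with h hh
    have hs : t + h ∈ Ico a t := ⟨by linarith [hh.1], by linarith [hh.2]⟩
    have := hbefore _ hs
    have := hqu _ hs
    rw [smul_eq_mul]
    exact mul_nonpos_of_nonpos_of_nonneg (inv_nonpos.2 hh.2.le)
      (by simp only [Pi.sub_apply]; linarith)
  linarith

local notation "Φ" => Matrix.toEuclideanCLM (𝕜 := ℂ)

section LamMin

variable {n : ℕ} {M : Matrix (Fin n) (Fin n) ℂ}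

lemma Matrix.IsHermitian.toEuclideanCLM_eigenvectorBasis (hM : M.IsHermitian) (j : Fin n) :
    Φ M (hM.eigenvectorBasis j) = (hM.eigenvalues j : ℂ) • hM.eigenvectorBasis j := by
  ext i
  simpa [Matrix.ofLp_toEuclideanCLM] using congrFun (hM.mulVec_eigenvectorBasis j) i

lemma lamMin_eq_iInf (hM : M.IsHermitian) : lamMin M = ⨅ i, hM.eigenvalues i := dif_pos hM

lemma lamMin_le_eigenvalues (hM : M.IsHermitian) (i : Fin n) : lamMin M ≤ hM.eigenvalues i :=
  lamMin_eq_iInf hM ▸ ciInf_le (Set.finite_range _).bddBelow i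

lemma exists_eigenvalues_eq_lamMin [NeZero n] (hM : M.IsHermitian) :
    ∃ i, hM.eigenvalues i = lamMin M :=
  lamMin_eq_iInf hM ▸ exists_eq_ciInf_of_finite

lemma lamMin_mul_norm_sq_le_re_inner (hM : M.IsHermitian) (x : EuclideanSpace ℂ (Fin n)) :
    lamMin M * ‖x‖ ^ 2 ≤ (⟪x, Φ M x⟫_ℂ).re :=
  hM.eigenvectorBasis.mul_norm_sq_le_re_inner_apply hM.toEuclideanCLM_eigenvectorBasis
    (lamMin_le_eigenvalues hM) x

lemma exists_unit_eigenvector_lamMin [NeZero n] (hM : M.IsHermitian) :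
    ∃ x : EuclideanSpace ℂ (Fin n), ‖x‖ = 1 ∧ Φ M x = (lamMin M : ℂ) • x := by
  obtain ⟨i, hi⟩ := exists_eigenvalues_eq_lamMin hM
  exact ⟨_, hM.eigenvectorBasis.orthonormal.1 i, hi ▸ hM.toEuclideanCLM_eigenvectorBasis i⟩

lemma lamMin_le_add_norm_sub [NeZero n] {N : Matrix (Fin n) (Fin n) ℂ} (hM : M.IsHermitian)
    (hN : N.IsHermitian) : lamMin N ≤ lamMin M + ‖Φ N - Φ M‖ := by
  obtain ⟨x, hx1, hx⟩ := exists_unit_eigenvector_lamMin hM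
  have hNx := lamMin_mul_norm_sq_le_re_inner hN x
  have hdiff : (⟪x, (Φ N - Φ M) x⟫_ℂ).re ≤ ‖Φ N - Φ M‖ :=
    calc (⟪x, (Φ N - Φ M) x⟫_ℂ).re ≤ ‖x‖ * ‖(Φ N - Φ M) x‖ :=
          (Complex.re_le_norm _).trans (norm_inner_le_norm _ _)
      _ ≤ ‖Φ N - Φ M‖ := by simpa [hx1] using (Φ N - Φ M).le_opNorm x
  rw [hx1, one_pow, mul_one] at hNx
  rw [_root_.sub_apply, inner_sub_right, Complex.sub_re,
    re_inner_apply_of_apply_eq_smul hx1 hx] at hdiff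
  linarith

lemma abs_lamMin_sub_le [NeZero n] {N : Matrix (Fin n) (Fin n) ℂ} (hM : M.IsHermitian)
    (hN : N.IsHermitian) : |lamMin N - lamMin M| ≤ ‖Φ N - Φ M‖ :=
  abs_sub_le_iff.2 ⟨by linarith [lamMin_le_add_norm_sub hM hN],
    by linarith [lamMin_le_add_norm_sub hN hM, norm_sub_rev (Φ N) (Φ M)]⟩

lemma posDef_of_lamMin_pos (hM : M.IsHermitian) (h : 0 < lamMin M) : M.PosDef :=
  hM.posDef_iff_eigenvalues_pos.2 fun i => h.trans_le (lamMin_le_eigenvalues hM i)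

lemma Matrix.PosDef.lamMin_pos [NeZero n] (hM : M.PosDef) : 0 < lamMin M := by
  obtain ⟨i, hi⟩ := exists_eigenvalues_eq_lamMin hM.isHermitian
  exact hi ▸ hM.eigenvalues_pos i

end LamMin

lemma Matrix.PosSemidef.isPositive_toEuclideanCLM {ι : Type*} [Fintype ι] [DecidableEq ι]
    {M : Matrix ι ι ℂ} (hM : M.PosSemidef) : (Φ M).IsPositive := by
  rwa [← ContinuousLinearMap.isPositive_toLinearMap_iff,
    Matrix.coe_toEuclideanCLM_eq_toEuclideanLin, Matrix.isPositive_toEuclideanLin_iff]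

lemma toEuclideanCLM_lindRHS {n : ℕ} (H L : Matrix (Fin n) (Fin n) ℂ)
    (A : Matrix (Fin n × Fin n) (Fin n × Fin n) ℂ) (M : Matrix (Fin n) (Fin n) ℂ) :
    Φ (lindRHS H L A M) = lindbladian (Φ (H + meanField A M)) (Φ L) (Φ M) := by
  simp only [lindRHS, lindbladian, map_add, map_sub, map_smul, map_mul,
    ← Matrix.star_eq_conjTranspose, map_star]

lemma hasDerivAt_toEuclideanCLM {ι : Type*} [Fintype ι] [DecidableEq ι]
    {m : ℝ → Matrix ι ι ℂ} {D : Matrix ι ι ℂ} {t : ℝ}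
    (hm : ∀ i j, HasDerivAt (fun s => m s i j) (D i j) t) :
    HasDerivAt (fun s => Φ (m s)) (Φ D) t := by
  have hexp : ∀ M : Matrix ι ι ℂ, Φ M = ∑ i, ∑ j, M i j • Φ (Matrix.single i j 1) := fun M => by
    conv_lhs => rw [Matrix.matrix_eq_sum_single M]
    simp only [map_sum, ← map_smul, Matrix.smul_single, smul_eq_mul, mul_one]
  rw [funext fun s => hexp (m s), hexp D]
  exact HasDerivAt.fun_sum fun i _ => HasDerivAt.fun_sum fun j _ => (hm i j).smul_const
    (Φ (Matrix.single i j (1 : ℂ)))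

lemma continuousOn_lamMin_comp {α : Type*} [TopologicalSpace α] {n : ℕ} [NeZero n]
    {m : α → Matrix (Fin n) (Fin n) ℂ} {s : Set α} (hm : ∀ t ∈ s, (m t).IsHermitian)
    (hc : ContinuousOn (fun t => Φ (m t)) s) : ContinuousOn (fun t => lamMin (m t)) s := by
  intro t ht
  refine tendsto_iff_dist_tendsto_zero.2 (squeeze_zero' (g := fun s => ‖Φ (m s) - Φ (m t)‖)
    (.of_forall fun _ => dist_nonneg) ?_ ?_)
  · filter_upwards [self_mem_nhdsWithin] with s hs
    exact abs_lamMin_sub_le (hm t ht) (hm s hs)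
  · simpa using ((hc t ht).sub (continuousWithinAt_const (b := Φ (m t)))).norm.tendsto

lemma mul_exp_lt_lamMin_of_lindblad {n : ℕ} [NeZero n] {T : ℝ}
    {H L : Matrix (Fin n) (Fin n) ℂ} {A : Matrix (Fin n × Fin n) (Fin n × Fin n) ℂ}
    {m : ℝ → Matrix (Fin n) (Fin n) ℂ}
    (hderiv : ∀ t ∈ Icc 0 T, ∀ i j : Fin n,
      HasDerivAt (fun u => m u i j) ((lindRHS H L A (m t)) i j) t)
    (hherm : ∀ t ∈ Icc 0 T, (m t).IsHermitian)
    {a b : ℝ} (ha : 0 < a) (ha0 : a < lamMin (m 0)) (hb : opNorm L ^ 2 < b) :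
    ∀ t ∈ Icc 0 T, a * Real.exp (-b * t) < lamMin (m t) := by
  have hΦ : ∀ t ∈ Icc 0 T, HasDerivAt (fun s => Φ (m s))
      (lindbladian (Φ (H + meanField A (m t))) (Φ L) (Φ (m t))) t := fun t ht =>
    toEuclideanCLM_lindRHS H L A (m t) ▸ hasDerivAt_toEuclideanCLM (hderiv t ht)
  refine lt_on_Icc_of_contact_deriv_gt (g' := fun t => -b * (a * Real.exp (-b * t)))
    (continuousOn_lamMin_comp hherm fun t ht => (hΦ t ht).continuousAt.continuousWithinAt)
    (fun t _ => ?_) (by simpa using ha0) ?_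
  · exact (((hasDerivAt_id t).const_mul (-b)).exp.const_mul a).congr_deriv (by simp; ring)
  rintro t ⟨ht0, htT⟩ hcontact
  have htI : t ∈ Icc 0 T := ⟨ht0.le, htT⟩
  have hpos : 0 < lamMin (m t) := hcontact ▸ mul_pos ha (Real.exp_pos _)
  obtain ⟨x, hx1, hx⟩ := exists_unit_eigenvector_lamMin (hherm t htI)
  refine ⟨_, _, (hΦ t htI).re_inner_apply_apply x, ?_, re_inner_apply_of_apply_eq_smul hx1 hx,
    fun s hs => ?_⟩
  · have hdiss := neg_mul_le_re_inner_lindbladian_apply (K := Φ (H + meanField A (m t))) (L := Φ L)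
      (posDef_of_lamMin_pos (hherm t htI) hpos).posSemidef.isPositive_toEuclideanCLM hx1 hx
    rw [← hcontact]
    simp only [opNorm] at hb
    nlinarith
  · simpa [hx1] using lamMin_mul_norm_sq_le_re_inner (hherm s ⟨hs.1, hs.2.le.trans htT⟩) x

theorem lindblad_faithfulness_general {n : ℕ} (hn : 0 < n) (T : ℝ)
    (H L : Matrix (Fin n) (Fin n) ℂ)
    (A : Matrix (Fin n × Fin n) (Fin n × Fin n) ℂ)
    (m : ℝ → Matrix (Fin n) (Fin n) ℂ)
    (hderiv : ∀ t ∈ Set.Icc 0 T, ∀ i j : Fin n,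
      HasDerivAt (fun u => m u i j) ((lindRHS H L A (m t)) i j) t)
    (hherm : ∀ t ∈ Set.Icc 0 T, (m t).IsHermitian)
    (h0 : (m 0).PosDef) :
    ∀ t ∈ Set.Icc 0 T, (m t).PosDef ∧
      lamMin (m t) ≥ lamMin (m 0) * Real.exp (-(opNorm L) ^ 2 * t) := by
  have : NeZero n := ⟨hn.ne'⟩
  have h0pos : 0 < lamMin (m 0) := h0.lamMin_pos
  have hbound : ∀ t ∈ Icc 0 T, lamMin (m 0) * Real.exp (-(opNorm L) ^ 2 * t) ≤ lamMin (m t) := by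
    intro t ht
    have hlim : Tendsto (fun ε => (lamMin (m 0) - ε) * Real.exp (-(opNorm L ^ 2 + ε) * t))
        (𝓝[>] 0) (𝓝 (lamMin (m 0) * Real.exp (-(opNorm L) ^ 2 * t))) := by
      have : Continuous fun ε => (lamMin (m 0) - ε) * Real.exp (-(opNorm L ^ 2 + ε) * t) := by
        fun_prop
      simpa only [sub_zero, add_zero] using (this.continuousWithinAt (s := Ioi 0) (x := 0)).tendsto
    refine le_of_tendsto hlim ?_
    filter_upwards [Ioo_mem_nhdsGT h0pos] with ε hε
    exact (mul_exp_lt_lamMin_of_lindblad hderiv hherm (sub_pos.2 hε.2) (by linarith [hε.1])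
      (by linarith [hε.1]) t ht).le
  exact fun t ht => ⟨posDef_of_lamMin_pos (hherm t ht)
    ((mul_pos h0pos (Real.exp_pos _)).trans_le (hbound t ht)), hbound t ht⟩

/-- Faithfulness is propagated by the mean-field Lindblad flow with an explicit lower
bound on the smallest eigenvalue: `λ_min(m_t) ≥ λ_min(m_0)·e^{−‖L‖² t}`. -/
theorem lindblad_faithfulness {n : ℕ} (hn : 0 < n) (T : ℝ) (hT : 0 ≤ T)
    (H L : Matrix (Fin n) (Fin n) ℂ) (hH : H.IsHermitian)
    (A : Matrix (Fin n × Fin n) (Fin n × Fin n) ℂ) (hA : A.IsHermitian)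
    (m : ℝ → Matrix (Fin n) (Fin n) ℂ)
    (hderiv : ∀ t ∈ Set.Icc 0 T, ∀ i j : Fin n,
      HasDerivAt (fun u => m u i j) ((lindRHS H L A (m t)) i j) t)
    (hherm : ∀ t ∈ Set.Icc 0 T, (m t).IsHermitian)
    (htrace : ∀ t ∈ Set.Icc 0 T, (m t).trace = 1)
    (h0 : (m 0).PosDef) :
    ∀ t ∈ Set.Icc 0 T, (m t).PosDef ∧
      lamMin (m t) ≥ lamMin (m 0) * Real.exp (-(opNorm L) ^ 2 * t) :=
  lindblad_faithfulness_general hn T H L A m hderiv hherm h0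
end

section
/- Let h ∈ B(ℍ⊗ℍ) and a density operator ϱ on ℍ satisfy tr₂((1⊗ϱ)h) = 0 and tr₁((ϱ⊗1)h) = 0. For edges e = {i,j} ⊂ {1,…,N}, let h_e denote the copy of h acting on factors i and j of ℍ^{⊗N}. If in a product h_{e₁}⋯h_{e_k} some index a ∈ {1,…,N} appears as an endpoint of exactly one of the edges e₁,…,e_k, then tr(ϱ^{⊗N} h_{e₁}⋯h_{e_k}) = 0. -/
open Matrix Kronecker
open scoped ComplexOrder

/-- Partial trace over the first tensor factor. -/
noncomputable def ptrace1 {n : ℕ} (M : Matrix (Fin n × Fin n) (Fin n × Fin n) ℂ) :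
    Matrix (Fin n) (Fin n) ℂ :=
  Matrix.of fun i j => ∑ k : Fin n, M (k, i) (k, j)

/-- The copy `h_e` of a two-body operator `h` acting on the tensor factors `i` and `j`
of `ℍ^{⊗N}` (and as the identity on the remaining factors). -/
noncomputable def twoBody {n N : ℕ} (h : Matrix (Fin n × Fin n) (Fin n × Fin n) ℂ)
    (i j : Fin N) : Matrix (Fin N → Fin n) (Fin N → Fin n) ℂ :=
  Matrix.of fun x y =>
    h (x i, x j) (y i, y j) *
      ∏ l ∈ Finset.univ \ {i, j}, (if x l = y l then (1 : ℂ) else 0)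

/-- The `N`-fold tensor power `ϱ^{⊗N}`. -/
noncomputable def tensorPow {n : ℕ} (ϱ : Matrix (Fin n) (Fin n) ℂ) (N : ℕ) :
    Matrix (Fin N → Fin n) (Fin N → Fin n) ℂ :=
  Matrix.of fun x y => ∏ l : Fin N, ϱ (x l) (y l)

/-!
Split off the site `a`, `ℍ^{⊗N} ≅ ℍ ⊗ ℍ^{⊗(N-1)}`. Then `ϱ^{⊗N} = ϱ ⊗ ϱ^{⊗(N-1)}`, and every `h_e`
with `a ∉ e`, hence every product of such, is of the form `1 ⊗ C`. By cyclicity of the trace the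
expectation becomes `tr(h_{a j} (ϱ ⊗ C))` for the unique edge `{a, j}` at `a`. Tracing out site `a`
first turns this into a trace against `tr₁((ϱ ⊗ 1) h)` on site `j` (or `tr₂((1 ⊗ ϱ) h)` when `a` is
the second endpoint), which vanishes.
-/

theorem trace_submatrix_equiv {m n R : Type*} [Fintype m] [Fintype n] [AddCommMonoid R]
    (M : Matrix m m R) (e : n ≃ m) : (M.submatrix e e).trace = M.trace :=
  e.sum_comp fun i => M i i

theorem trace_mul_kronecker_eq_zero {α β R : Type*} [Fintype α] [Fintype β] [CommSemiring R]
    (T : Matrix (α × β) (α × β) R) (g : Matrix α α R) (C : Matrix β β R)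
    (hT : ∀ x y, ∑ u, ∑ v, g v u * T (u, x) (v, y) = 0) : (T * (g ⊗ₖ C)).trace = 0 := by
  calc (T * (g ⊗ₖ C)).trace = ∑ x, ∑ y, (∑ u, ∑ v, g v u * T (u, x) (v, y)) * C y x := by
        simp only [trace, diag, mul_apply, Fintype.sum_prod_type, kroneckerMap_apply,
          Finset.sum_mul]
        rw [Finset.sum_comm]
        refine Finset.sum_congr rfl fun x _ => ?_
        refine (Finset.sum_congr rfl fun u _ => Finset.sum_comm).trans
          (Finset.sum_comm.trans (Finset.sum_congr rfl fun y _ => ?_))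
        exact Finset.sum_congr rfl fun u _ => Finset.sum_congr rfl fun v _ => by ring
    _ = 0 := by simp [hT]

theorem forall_notMem_funSplitAt_symm_eq_iff {ι α : Type*} [DecidableEq ι] {a : ι} {s : Finset ι}
    {u v : α} {x y : {l // l ≠ a} → α} :
    (∀ l, l ∉ s → (Equiv.funSplitAt a α).symm (u, x) l = (Equiv.funSplitAt a α).symm (v, y) l) ↔
      (a ∉ s → u = v) ∧ ∀ l : {l // l ≠ a}, l.1 ∉ s → x l = y l := by
  simp only [Equiv.funSplitAt_symm_apply]
  constructor
  · intro H
    exact ⟨fun ha => by simpa using H a ha, fun l hl => by simpa [dif_neg l.2] using H l hl⟩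
  · rintro ⟨huv, H⟩ l hl
    by_cases hla : l = a
    · subst hla
      simp [huv hl]
    · simp [dif_neg hla, H ⟨l, hla⟩ hl]

section FactorsAt
variable {ι α R : Type*} [DecidableEq ι] [CommSemiring R]

def FactorsAt (a : ι) (g : Matrix α α R) (M : Matrix (ι → α) (ι → α) R) : Prop :=
  ∃ C, M.submatrix (Equiv.funSplitAt a α).symm (Equiv.funSplitAt a α).symm = g ⊗ₖ C

variable {a : ι}

theorem FactorsAt.mul [Fintype ι] [Fintype α] {g g' : Matrix α α R}
    {M M' : Matrix (ι → α) (ι → α) R} (hM : FactorsAt a g M) (hM' : FactorsAt a g' M') :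
    FactorsAt a (g * g') (M * M') := by
  obtain ⟨C, hC⟩ := hM
  obtain ⟨C', hC'⟩ := hM'
  refine ⟨C * C', ?_⟩
  rw [← submatrix_mul_equiv M M' _ (Equiv.funSplitAt a α).symm, hC, hC', mul_kronecker_mul]

theorem factorsAt_one [Fintype ι] [DecidableEq α] : FactorsAt a 1 (1 : Matrix (ι → α) (ι → α) R) :=
  ⟨1, by rw [submatrix_one_equiv, one_kronecker_one]⟩

theorem FactorsAt.list_prod [Fintype ι] [Fintype α] [DecidableEq α]
    {L : List (Matrix (ι → α) (ι → α) R)} (hL : ∀ M ∈ L, FactorsAt a 1 M) :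
    FactorsAt a 1 L.prod := by
  induction L with
  | nil => exact factorsAt_one
  | cons M L ih =>
    rw [List.prod_cons, ← mul_one (1 : Matrix α α R)]
    exact (hL M List.mem_cons_self).mul (ih fun M' hM' => hL M' (List.mem_cons_of_mem M hM'))

theorem trace_mul_list_prod_eq_zero [Fintype ι] [Fintype α] [DecidableEq α] {g : Matrix α α R}
    {ρ : Matrix (ι → α) (ι → α) R} {L : List (Matrix (ι → α) (ι → α) R)} {r : ℕ}
    (hr : r < L.length) (hρ : FactorsAt a g ρ)
    (hL : ∀ i (hi : i < L.length), i ≠ r → FactorsAt a 1 L[i])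
    (hLr : ∀ C, FactorsAt a g C → (L[r] * C).trace = 0) :
    (ρ * L.prod).trace = 0 := by
  have hrest : ∀ M ∈ L.take r ++ L.drop (r + 1), FactorsAt a 1 M := by
    rw [← List.eraseIdx_eq_take_drop_succ]
    intro M hM
    obtain ⟨i, hi, hir, rfl⟩ := List.mem_eraseIdx_iff_getElem.mp hM
    exact hL i hi hir
  have hA := FactorsAt.list_prod fun M hM => hrest M (List.mem_append_left _ hM)
  have hB := FactorsAt.list_prod fun M hM => hrest M (List.mem_append_right _ hM)
  have hsplit : L.prod = (L.take r).prod * (L[r] * (L.drop (r + 1)).prod) := by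
    rw [← List.prod_take_mul_prod_drop L r, List.drop_eq_getElem_cons hr, List.prod_cons]
  have hC := hB.mul (hρ.mul hA)
  rw [mul_one, one_mul] at hC
  rw [hsplit, ← mul_assoc, trace_mul_comm, mul_assoc]
  exact hLr _ hC

end FactorsAt

section Sites
variable {n N : ℕ}

theorem ptrace1_kronecker_one_mul_apply (ϱ : Matrix (Fin n) (Fin n) ℂ)
    (h : Matrix (Fin n × Fin n) (Fin n × Fin n) ℂ) (β β' : Fin n) :
    ptrace1 ((ϱ ⊗ₖ (1 : Matrix (Fin n) (Fin n) ℂ)) * h) β β' =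
      ∑ u, ∑ v, ϱ v u * h (u, β) (v, β') := by
  simp only [ptrace1, of_apply, mul_apply, Fintype.sum_prod_type, kroneckerMap_apply, one_apply,
    mul_ite, mul_one, mul_zero, ite_mul, zero_mul, Finset.sum_ite_eq, Finset.mem_univ, if_true]
  exact Finset.sum_comm

theorem ptrace1_kronecker_one_mul_submatrix_swap (ϱ : Matrix (Fin n) (Fin n) ℂ)
    (h : Matrix (Fin n × Fin n) (Fin n × Fin n) ℂ) :
    ptrace1 ((ϱ ⊗ₖ (1 : Matrix (Fin n) (Fin n) ℂ)) * h.submatrix Prod.swap Prod.swap) =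
      ptrace2 (((1 : Matrix (Fin n) (Fin n) ℂ) ⊗ₖ ϱ) * h) := by
  ext β β'
  rw [ptrace1_kronecker_one_mul_apply]
  simp only [ptrace2, of_apply, mul_apply, Fintype.sum_prod_type, kroneckerMap_apply, one_apply,
    ite_mul, one_mul, zero_mul, submatrix_apply, Prod.swap_prod_mk]
  rw [Finset.sum_comm]
  refine Finset.sum_congr rfl fun v _ => ?_
  rw [Finset.sum_comm]
  simp only [Finset.sum_ite_eq, Finset.mem_univ, if_true]

theorem tensorPow_factorsAt (ϱ : Matrix (Fin n) (Fin n) ℂ) (a : Fin N) :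
    FactorsAt a ϱ (tensorPow ϱ N) := by
  refine ⟨Matrix.of fun x y => ∏ l, ϱ (x l) (y l), ?_⟩
  ext ⟨u, x⟩ ⟨v, y⟩
  simp only [tensorPow, submatrix_apply, of_apply, kroneckerMap_apply,
    Fintype.prod_eq_mul_prod_subtype_ne _ a, Equiv.funSplitAt_symm_apply]
  exact congrArg _ (Finset.prod_congr rfl fun l _ => by rw [dif_neg l.2, dif_neg l.2])

theorem twoBody_factorsAt (h : Matrix (Fin n × Fin n) (Fin n × Fin n) ℂ) {a i j : Fin N}
    (hi : i ≠ a) (hj : j ≠ a) : FactorsAt a 1 (twoBody h i j) := by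
  refine ⟨Matrix.of fun x y => h (x ⟨i, hi⟩, x ⟨j, hj⟩) (y ⟨i, hi⟩, y ⟨j, hj⟩) *
    if ∀ l : {l // l ≠ a}, l.1 ∉ ({i, j} : Finset (Fin N)) → x l = y l then 1 else 0, ?_⟩
  ext ⟨u, x⟩ ⟨v, y⟩
  have ha : a ∉ ({i, j} : Finset (Fin N)) := by simp [hi.symm, hj.symm]
  simp only [twoBody, submatrix_apply, of_apply, kroneckerMap_apply, Finset.prod_boole,
    one_apply, Finset.mem_sdiff, Finset.mem_univ, true_and, forall_notMem_funSplitAt_symm_eq_iff]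
  simp only [ha, not_false_eq_true, true_implies, ite_and, Equiv.funSplitAt_symm_apply,
    dif_neg hi, dif_neg hj]
  split_ifs <;> ring

theorem twoBody_submatrix_funSplitAt_apply (h : Matrix (Fin n × Fin n) (Fin n × Fin n) ℂ)
    {a j : Fin N} (hj : j ≠ a) (u v : Fin n) (x y : {l // l ≠ a} → Fin n) :
    (twoBody h a j).submatrix (Equiv.funSplitAt a (Fin n)).symm
      (Equiv.funSplitAt a (Fin n)).symm (u, x) (v, y) =
      h (u, x ⟨j, hj⟩) (v, y ⟨j, hj⟩) *
        if ∀ l : {l // l ≠ a}, l.1 ∉ ({a, j} : Finset (Fin N)) → x l = y l then 1 else 0 := by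
  simp only [twoBody, submatrix_apply, of_apply, Finset.prod_boole, Finset.mem_sdiff,
    Finset.mem_univ, true_and, forall_notMem_funSplitAt_symm_eq_iff]
  simp [Equiv.funSplitAt_symm_apply, dif_neg hj]

theorem trace_twoBody_mul_eq_zero {h : Matrix (Fin n × Fin n) (Fin n × Fin n) ℂ}
    {ϱ : Matrix (Fin n) (Fin n) ℂ} (hc : ptrace1 ((ϱ ⊗ₖ (1 : Matrix (Fin n) (Fin n) ℂ)) * h) = 0)
    {a j : Fin N} (hj : j ≠ a) {C : Matrix (Fin N → Fin n) (Fin N → Fin n) ℂ}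
    (hC : FactorsAt a ϱ C) : (twoBody h a j * C).trace = 0 := by
  obtain ⟨C₀, hC₀⟩ := hC
  rw [← trace_submatrix_equiv _ (Equiv.funSplitAt a (Fin n)).symm,
    ← submatrix_mul_equiv _ _ _ (Equiv.funSplitAt a (Fin n)).symm, hC₀]
  refine trace_mul_kronecker_eq_zero _ _ _ fun x y => ?_
  simp only [twoBody_submatrix_funSplitAt_apply h hj, ← mul_assoc, ← Finset.sum_mul]
  rw [← ptrace1_kronecker_one_mul_apply, hc, Matrix.zero_apply, zero_mul]

theorem twoBody_swap (h : Matrix (Fin n × Fin n) (Fin n × Fin n) ℂ) (i j : Fin N) :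
    twoBody h i j = twoBody (h.submatrix Prod.swap Prod.swap) j i := by
  ext x y
  simp only [twoBody, of_apply, submatrix_apply, Prod.swap_prod_mk, Finset.pair_comm j i]

end Sites

theorem isolated_vertex_vanishing_general {n N k : ℕ}
    (h : Matrix (Fin n × Fin n) (Fin n × Fin n) ℂ)
    (ϱ : Matrix (Fin n) (Fin n) ℂ)
    (hc2 : ptrace2 (((1 : Matrix (Fin n) (Fin n) ℂ) ⊗ₖ ϱ) * h) = 0)
    (hc1 : ptrace1 ((ϱ ⊗ₖ (1 : Matrix (Fin n) (Fin n) ℂ)) * h) = 0)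
    (p q : Fin k → Fin N) (hedge : ∀ r, p r ≠ q r)
    (a : Fin N)
    (honce : (Finset.univ.filter fun r : Fin k => p r = a ∨ q r = a).card = 1) :
    (tensorPow ϱ N * (List.ofFn fun r : Fin k => twoBody h (p r) (q r)).prod).trace = 0 := by
  obtain ⟨r₀, hr₀⟩ := Finset.card_eq_one.mp honce
  have hincident : ∀ r, (p r = a ∨ q r = a) ↔ r = r₀ := by
    simpa [Finset.ext_iff] using hr₀
  refine trace_mul_list_prod_eq_zero (r := r₀) (by simp) (tensorPow_factorsAt ϱ a)
    (fun i hi hir => ?_) (fun C hC => ?_)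
  · have hoff := (hincident ⟨i, by simpa using hi⟩).not.mpr (Fin.ne_of_val_ne hir)
    rw [List.getElem_ofFn]
    exact twoBody_factorsAt h (fun hp => hoff (Or.inl hp)) (fun hq => hoff (Or.inr hq))
  · rw [List.getElem_ofFn]
    rcases (hincident r₀).mpr rfl with hp | hq
    · rw [hp]
      exact trace_twoBody_mul_eq_zero hc1 (hp ▸ hedge r₀).symm hC
    · rw [twoBody_swap, hq]
      refine trace_twoBody_mul_eq_zero ?_ (hq ▸ hedge r₀) hC
      rw [ptrace1_kronecker_one_mul_submatrix_swap, hc2]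

/-- If `h` is centered with respect to the density operator `ϱ` in both factors, then any
product `h_{e₁}⋯h_{e_k}` in which some site `a` is an endpoint of exactly one edge has
vanishing expectation in the product state `ϱ^{⊗N}`. -/
theorem isolated_vertex_vanishing {n N k : ℕ}
    (h : Matrix (Fin n × Fin n) (Fin n × Fin n) ℂ)
    (ϱ : Matrix (Fin n) (Fin n) ℂ) (hϱ : ϱ.PosSemidef) (htr : ϱ.trace = 1)
    (hc2 : ptrace2 (((1 : Matrix (Fin n) (Fin n) ℂ) ⊗ₖ ϱ) * h) = 0)
    (hc1 : ptrace1 ((ϱ ⊗ₖ (1 : Matrix (Fin n) (Fin n) ℂ)) * h) = 0)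
    (p q : Fin k → Fin N) (hedge : ∀ r, p r ≠ q r)
    (a : Fin N)
    (honce : (Finset.univ.filter fun r : Fin k => p r = a ∨ q r = a).card = 1) :
    (tensorPow ϱ N * (List.ofFn fun r : Fin k => twoBody h (p r) (q r)).prod).trace = 0 :=
  isolated_vertex_vanishing_general h ϱ hc2 hc1 p q hedge a honce
end

section
/- For N, k ≥ 1 with 2k ≤ N, the set 𝔎_{N,2k} of tuples (i₁,j₁,…,i_k,j_k) ∈ {1,…,N}^{2k} in which no index value appears exactly once has cardinality at most k·e^k·N^k·k^k. -/
/-- The set of `2k`-tuples with entries in `{1,…,N}` in which no value appears exactly once. -/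
def noSingleton (N k : ℕ) : Set (Fin (2 * k) → Fin N) :=
  {v | ∀ a : Fin N, (Finset.univ.filter fun s => v s = a).card ≠ 1}

/-- Any tuple with no singleton values has its range inside a set of size `k`. -/
lemma noSingleton_range_subset (N k : ℕ) (hkN : 2 * k ≤ N)
    {v : Fin (2 * k) → Fin N} (hv : v ∈ noSingleton N k) :
    ∃ S : Finset (Fin N), S.card = k ∧ ∀ s, v s ∈ S := by
  classical
  set T : Finset (Fin N) := Finset.image v Finset.univ with hT
  have hcardT : T.card ≤ k := by
    have hsum : (Finset.univ : Finset (Fin (2 * k))).card =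
        ∑ a ∈ T, ((Finset.univ : Finset (Fin (2 * k))).filter fun s => v s = a).card :=
      Finset.card_eq_sum_card_fiberwise (fun x _ => Finset.mem_image_of_mem v (Finset.mem_univ x))
    have hlb : ∀ a ∈ T, 2 ≤ ((Finset.univ : Finset (Fin (2 * k))).filter fun s => v s = a).card := by
      intro a ha
      have hne1 := hv a
      have hpos : 0 < ((Finset.univ : Finset (Fin (2 * k))).filter fun s => v s = a).card := by
        rw [Finset.card_pos]
        obtain ⟨s, _, hs⟩ := Finset.mem_image.1 ha
        exact ⟨s, Finset.mem_filter.2 ⟨Finset.mem_univ s, hs⟩⟩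
      omega
    have h2 : 2 * T.card ≤ ∑ a ∈ T, ((Finset.univ : Finset (Fin (2 * k))).filter fun s => v s = a).card := by
      calc 2 * T.card = ∑ _a ∈ T, 2 := by rw [Finset.sum_const, smul_eq_mul, mul_comm]
        _ ≤ _ := Finset.sum_le_sum hlb
    have : 2 * T.card ≤ 2 * k := by
      rw [← hsum] at h2; simpa using h2
    omega
  have hTN : T ⊆ Finset.univ := Finset.subset_univ T
  have hkcard : k ≤ (Finset.univ : Finset (Fin N)).card := by
    simp only [Finset.card_univ, Fintype.card_fin]; omega
  obtain ⟨S, hTS, _, hScard⟩ := Finset.exists_subsuperset_card_eq hTN hcardT hkcard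
  exact ⟨S, hScard, fun s => hTS (Finset.mem_image_of_mem v (Finset.mem_univ s))⟩

/-- For `2k ≤ N`, the number of `2k`-tuples in `{1,…,N}^{2k}` in which no index appears
exactly once is at most `k·e^k·N^k·k^k`. -/
theorem card_noSingleton_le (N k : ℕ) (hN : 1 ≤ N) (hk : 1 ≤ k) (hkN : 2 * k ≤ N) :
    ((noSingleton N k).ncard : ℝ) ≤
      (k : ℝ) * Real.exp 1 ^ k * (N : ℝ) ^ k * (k : ℝ) ^ k := by
  classical
  -- the big finset covering noSingleton
  set B : Finset (Fin (2 * k) → Fin N) :=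
    (Finset.powersetCard k (Finset.univ : Finset (Fin N))).biUnion
      (fun S => Fintype.piFinset fun _ : Fin (2 * k) => S) with hB
  have hsub : noSingleton N k ⊆ ↑B := by
    intro v hv
    obtain ⟨S, hScard, hSmem⟩ := noSingleton_range_subset N k hkN hv
    simp only [hB, Finset.coe_biUnion, Set.mem_iUnion]
    exact ⟨S, Finset.mem_coe.2 (Finset.mem_powersetCard.2 ⟨Finset.subset_univ S, hScard⟩),
      Fintype.mem_piFinset.2 hSmem⟩
  have hncard : (noSingleton N k).ncard ≤ N.choose k * k ^ (2 * k) := by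
    calc (noSingleton N k).ncard ≤ (↑B : Set _).ncard :=
          Set.ncard_le_ncard hsub (B.finite_toSet)
      _ = B.card := Set.ncard_coe_finset B
      _ ≤ ∑ S ∈ Finset.powersetCard k (Finset.univ : Finset (Fin N)),
            (Fintype.piFinset fun _ : Fin (2 * k) => S).card := Finset.card_biUnion_le
      _ = ∑ S ∈ Finset.powersetCard k (Finset.univ : Finset (Fin N)), k ^ (2 * k) := by
          apply Finset.sum_congr rfl
          intro S hS
          rw [Fintype.card_piFinset_const, (Finset.mem_powersetCard.1 hS).2]
      _ = N.choose k * k ^ (2 * k) := by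
          rw [Finset.sum_const, smul_eq_mul, Finset.card_powersetCard, Finset.card_univ,
            Fintype.card_fin]
  have hreal : ((noSingleton N k).ncard : ℝ) ≤ (N.choose k : ℝ) * (k : ℝ) ^ (2 * k) := by
    calc ((noSingleton N k).ncard : ℝ) ≤ ((N.choose k * k ^ (2 * k) : ℕ) : ℝ) := by
          exact_mod_cast hncard
      _ = (N.choose k : ℝ) * (k : ℝ) ^ (2 * k) := by push_cast; ring
  -- analytic estimates
  have hchoose : (N.choose k : ℝ) ≤ (N : ℝ) ^ k / (Nat.factorial k : ℝ) := by
    exact_mod_cast Nat.choose_le_pow_div k N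
  have hfact : (k : ℝ) ^ k / (Nat.factorial k : ℝ) ≤ Real.exp 1 ^ k := by
    have h := Real.pow_div_factorial_le_exp (x := (k : ℝ)) (by positivity) k
    have he : Real.exp (k : ℝ) = Real.exp 1 ^ k := by
      rw [← Real.exp_nat_mul]; norm_num
    rwa [he] at h
  have hfactpos : (0 : ℝ) < (Nat.factorial k : ℝ) := by exact_mod_cast k.factorial_pos
  have hNpow : (0 : ℝ) ≤ (N : ℝ) ^ k := by positivity
  have hkpow : (0 : ℝ) ≤ (k : ℝ) ^ k := by positivity
  calc ((noSingleton N k).ncard : ℝ) ≤ (N.choose k : ℝ) * (k : ℝ) ^ (2 * k) := hreal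
    _ ≤ ((N : ℝ) ^ k / (Nat.factorial k : ℝ)) * (k : ℝ) ^ (2 * k) := by
        apply mul_le_mul_of_nonneg_right hchoose (by positivity)
    _ = ((k : ℝ) ^ k / (Nat.factorial k : ℝ)) * ((N : ℝ) ^ k * (k : ℝ) ^ k) := by
        rw [two_mul, pow_add]; ring
    _ ≤ Real.exp 1 ^ k * ((N : ℝ) ^ k * (k : ℝ) ^ k) := by
        apply mul_le_mul_of_nonneg_right hfact (by positivity)
    _ ≤ (k : ℝ) * Real.exp 1 ^ k * (N : ℝ) ^ k * (k : ℝ) ^ k := by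
        have hk1 : (1 : ℝ) ≤ (k : ℝ) := by exact_mod_cast hk
        nlinarith [mul_nonneg (mul_nonneg (sub_nonneg.mpr hk1) (le_of_lt (pow_pos (Real.exp_pos 1) k))) (mul_nonneg hNpow hkpow)]
end

section
/- Let ρ be a density operator on ℍ, σ a positive definite density operator, X a self-adjoint operator, and λ > 0. Then tr(ρX) ≤ (1/λ)·D(ρ‖σ) + (1/λ)·log tr(exp(log σ + λX)), where D(ρ‖σ) = tr(ρ(log ρ − log σ)) is the Umegaki relative entropy. -/
open Matrix
open scoped ComplexOrder

/-- Matrix exponential of a Hermitian matrix via the continuous functional calculus. -/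
noncomputable def mexp {n : ℕ} (M : Matrix (Fin n) (Fin n) ℂ) : Matrix (Fin n) (Fin n) ℂ :=
  cfc Real.exp M

/-- Umegaki relative entropy `D(ρ‖σ) = tr(ρ(log ρ − log σ))`. -/
noncomputable def relEnt {n : ℕ} (ρ σ : Matrix (Fin n) (Fin n) ℂ) : ℝ :=
  ((ρ * (mlog ρ - mlog σ)).trace).re

/-! With `H = log σ + λX` the claim is the Gibbs variational inequality
`tr(ρH) ≤ tr(ρ log ρ) + log tr(exp H)`. Diagonalize `ρ = Σ pᵢ |uᵢ⟩⟨uᵢ|` and `H = Σ hⱼ |vⱼ⟩⟨vⱼ|`: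
the overlaps `|⟨uᵢ, vⱼ⟩|²` form a doubly stochastic matrix `M` and `tr(ρH) = Σ pᵢ (M h)ᵢ`.
Convexity of `exp` gives `Σ exp (M h)ᵢ ≤ Σ exp hⱼ`, which reduces the claim to the classical
`Σ pᵢ aᵢ ≤ Σ pᵢ log pᵢ + log Σ exp aᵢ`, i.e. to Gibbs' inequality between `p` and the
distribution proportional to `exp a`. -/

open Finset Real

lemma mul_log_sub_mul_log_le {p q : ℝ} (hp : 0 ≤ p) (hq : 0 < q) :
    p * log q - p * log p ≤ q - p := by
  rcases hp.eq_or_lt with rfl | hp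
  · simpa using hq.le
  have h := mul_le_mul_of_nonneg_left (log_le_sub_one_of_pos (div_pos hq hp)) hp.le
  rw [log_div hq.ne' hp.ne', mul_sub, mul_sub, mul_div_cancel₀ _ hp.ne', mul_one] at h
  linarith

lemma sum_mul_le_sum_mul_log_add_log_sum_exp {ι : Type*} [Fintype ι] {p : ι → ℝ} (a : ι → ℝ)
    (hp : ∀ i, 0 ≤ p i) (hp1 : ∑ i, p i = 1) :
    ∑ i, p i * a i ≤ ∑ i, p i * log (p i) + log (∑ i, exp (a i)) := by
  set Z := ∑ i, exp (a i)
  obtain ⟨i₀, -⟩ := Finset.nonempty_of_sum_ne_zero (hp1 ▸ one_ne_zero)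
  have hZ : 0 < Z :=
    (exp_pos _).trans_le (single_le_sum (fun i _ => (exp_pos (a i)).le) (mem_univ i₀))
  have h : ∀ i, p i * a i - p i * log Z - p i * log (p i) ≤ exp (a i) / Z - p i := fun i => by
    have := mul_log_sub_mul_log_le (hp i) (div_pos (exp_pos (a i)) hZ)
    rwa [log_div (exp_pos _).ne' hZ.ne', log_exp, mul_sub] at this
  have hsum := sum_le_sum fun i (_ : i ∈ univ) => h i
  simp only [sum_sub_distrib, ← sum_div, ← sum_mul, hp1, one_mul] at hsum
  rw [show (∑ i, exp (a i)) / Z = 1 from div_self hZ.ne'] at hsum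
  linarith

namespace Matrix

variable {n : Type*} [Fintype n] [DecidableEq n]

lemma sum_exp_mulVec_le_of_mem_doublyStochastic {M : Matrix n n ℝ}
    (hM : M ∈ doublyStochastic ℝ n) (h : n → ℝ) :
    ∑ i, exp ((M *ᵥ h) i) ≤ ∑ i, exp (h i) :=
  calc ∑ i, exp ((M *ᵥ h) i) ≤ ∑ i, (M *ᵥ (exp ∘ h)) i := sum_le_sum fun i _ => by
        simpa [mulVec, dotProduct] using convexOn_exp.map_sum_le (t := univ) (w := M i) (p := h)
          (fun j _ => nonneg_of_mem_doublyStochastic hM) (sum_row_of_mem_doublyStochastic hM i)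
          (fun j _ => Set.mem_univ _)
    _ = ∑ i, exp (h i) := sum_mulVec_of_mem_doublyStochastic hM

lemma dotProduct_mulVec_le_of_mem_doublyStochastic {M : Matrix n n ℝ}
    (hM : M ∈ doublyStochastic ℝ n) {p : n → ℝ} (h : n → ℝ)
    (hp : ∀ i, 0 ≤ p i) (hp1 : ∑ i, p i = 1) :
    p ⬝ᵥ (M *ᵥ h) ≤ ∑ i, p i * log (p i) + log (∑ i, exp (h i)) := by
  obtain ⟨i₀, -⟩ := Finset.nonempty_of_sum_ne_zero (hp1 ▸ one_ne_zero)
  have hpos : 0 < ∑ i, exp ((M *ᵥ h) i) :=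
    (exp_pos _).trans_le (single_le_sum (fun i _ => (exp_pos _).le) (mem_univ i₀))
  calc p ⬝ᵥ (M *ᵥ h) ≤ ∑ i, p i * log (p i) + log (∑ i, exp ((M *ᵥ h) i)) :=
        sum_mul_le_sum_mul_log_add_log_sum_exp _ hp hp1
    _ ≤ _ := add_le_add_right (log_le_log hpos (sum_exp_mulVec_le_of_mem_doublyStochastic hM h)) _

variable {𝕜 : Type*} [RCLike 𝕜]

lemma of_norm_sq_mem_doublyStochastic {W : Matrix n n 𝕜} (hW : W ∈ unitaryGroup n 𝕜) :
    of (fun i j => ‖W i j‖ ^ 2) ∈ doublyStochastic ℝ n := by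
  refine mem_doublyStochastic_iff_sum.mpr ⟨fun i j => sq_nonneg _, fun i => ?_, fun j => ?_⟩
  · have h := congr_fun₂ (mem_unitaryGroup_iff.mp hW) i i
    simp only [mul_apply, star_apply, one_apply_eq, RCLike.star_def, RCLike.mul_conj] at h
    exact_mod_cast h
  · have h := congr_fun₂ (mem_unitaryGroup_iff'.mp hW) j j
    simp only [mul_apply, star_apply, one_apply_eq, RCLike.star_def, RCLike.conj_mul] at h
    exact_mod_cast h

lemma IsHermitian.trace_cfc {A : Matrix n n 𝕜} (hA : A.IsHermitian) (f : ℝ → ℝ) :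
    (cfc f A).trace = ((∑ i, f (hA.eigenvalues i) : ℝ) : 𝕜) := by
  rw [hA.cfc_eq, IsHermitian.cfc, Unitary.conjStarAlgAut_apply, trace_mul_cycle,
    Unitary.coe_star_mul_self, one_mul, trace_diagonal]
  simp

lemma IsHermitian.trace_mul_cfc {A : Matrix n n 𝕜} (hA : A.IsHermitian) (f : ℝ → ℝ) :
    (A * cfc f A).trace = ((∑ i, hA.eigenvalues i * f (hA.eigenvalues i) : ℝ) : 𝕜) := by
  rw [← hA.trace_cfc (fun x => x * f x), cfc_mul (fun x => x) f A
    (A.finite_real_spectrum.continuousOn _) (A.finite_real_spectrum.continuousOn f), cfc_id' ℝ A]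

lemma re_trace_diagonal_mul_mul_diagonal_mul_star (W : Matrix n n 𝕜) (a b : n → ℝ) :
    RCLike.re (diagonal (RCLike.ofReal ∘ a) * W * diagonal (RCLike.ofReal ∘ b) * star W).trace =
      a ⬝ᵥ (of (fun i j => ‖W i j‖ ^ 2) *ᵥ b) := by
  simp only [trace, diag_apply, mul_apply (N := star W), diagonal_mul, mul_diagonal, star_apply,
    RCLike.star_def, map_sum, dotProduct, mulVec, of_apply, mul_sum]
  refine sum_congr rfl fun i _ => sum_congr rfl fun j _ => ?_
  rw [mul_right_comm, mul_assoc _ (W i j), RCLike.mul_conj]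
  simp [mul_assoc]

lemma re_trace_conj_diagonal_mul_conj_diagonal {U V : Matrix n n 𝕜} (a b : n → ℝ) :
    RCLike.re ((U * diagonal (RCLike.ofReal ∘ a) * star U) *
      (V * diagonal (RCLike.ofReal ∘ b) * star V)).trace =
      a ⬝ᵥ (of (fun i j => ‖(star U * V) i j‖ ^ 2) *ᵥ b) := by
  rw [← re_trace_diagonal_mul_mul_diagonal_mul_star]
  simp only [StarMul.star_mul, star_star, mul_assoc]
  rw [trace_mul_comm U]
  simp only [mul_assoc]

lemma IsHermitian.re_trace_mul {A B : Matrix n n 𝕜} (hA : A.IsHermitian) (hB : B.IsHermitian) :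
    RCLike.re (A * B).trace = hA.eigenvalues ⬝ᵥ (of (fun i j =>
      ‖(star (hA.eigenvectorUnitary : Matrix n n 𝕜) * hB.eigenvectorUnitary) i j‖ ^ 2) *ᵥ
        hB.eigenvalues) := by
  conv_lhs => rw [hA.spectral_theorem, hB.spectral_theorem]
  exact re_trace_conj_diagonal_mul_conj_diagonal _ _

theorem PosSemidef.re_trace_mul_le {ρ H : Matrix n n 𝕜} (hρ : ρ.PosSemidef)
    (hρtr : ρ.trace = 1) (hH : H.IsHermitian) :
    RCLike.re (ρ * H).trace ≤
      RCLike.re (ρ * cfc log ρ).trace + log (RCLike.re (cfc exp H).trace) := by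
  have hp1 : ∑ i, hρ.1.eigenvalues i = 1 := by
    have h := hρ.1.trace_eq_sum_eigenvalues
    rw [hρtr] at h
    exact_mod_cast h.symm
  have hW : star (hρ.1.eigenvectorUnitary : Matrix n n 𝕜) * hH.eigenvectorUnitary ∈
      unitaryGroup n 𝕜 :=
    mul_mem (Unitary.star_mem (SetLike.coe_mem _)) (SetLike.coe_mem _)
  rw [hρ.1.re_trace_mul hH, hρ.1.trace_mul_cfc, hH.trace_cfc, RCLike.ofReal_re,
    RCLike.ofReal_re]
  exact dotProduct_mulVec_le_of_mem_doublyStochastic (of_norm_sq_mem_doublyStochastic hW) _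
    hρ.eigenvalues_nonneg hp1

end Matrix

theorem variational_formula_general {n : ℕ} (ρ σ X : Matrix (Fin n) (Fin n) ℂ)
    (hρ : ρ.PosSemidef) (hρtr : ρ.trace = 1)
    (hX : X.IsHermitian) (l : ℝ) (hl : 0 < l) :
    ((ρ * X).trace).re ≤
      (1 / l) * relEnt ρ σ +
        (1 / l) * Real.log (((mexp (mlog σ + (l : ℂ) • X)).trace).re) := by
  have hH : (mlog σ + (l : ℂ) • X).IsHermitian :=
    (cfc_predicate Real.log σ : IsSelfAdjoint (mlog σ)).add (hX.smul (Complex.conj_ofReal l))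
  have hgibbs : (ρ * (mlog σ + (l : ℂ) • X)).trace.re ≤
      (ρ * mlog ρ).trace.re + log (mexp (mlog σ + (l : ℂ) • X)).trace.re :=
    hρ.re_trace_mul_le hρtr hH
  rw [mul_add, trace_add, Complex.add_re, mul_smul_comm, trace_smul, smul_eq_mul,
    Complex.re_ofReal_mul] at hgibbs
  rw [relEnt, mul_sub, trace_sub, Complex.sub_re, ← mul_add, one_div, le_inv_mul_iff₀ hl]
  linarith

/-- Variational formula: `tr(ρX) ≤ (1/λ)D(ρ‖σ) + (1/λ) log tr(exp(log σ + λX))`. -/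
theorem variational_formula {n : ℕ} (ρ σ X : Matrix (Fin n) (Fin n) ℂ)
    (hρ : ρ.PosSemidef) (hρtr : ρ.trace = 1)
    (hσ : σ.PosDef) (hσtr : σ.trace = 1)
    (hX : X.IsHermitian) (l : ℝ) (hl : 0 < l) :
    ((ρ * X).trace).re ≤
      (1 / l) * relEnt ρ σ +
        (1 / l) * Real.log (((mexp (mlog σ + (l : ℂ) • X)).trace).re) :=
  variational_formula_general ρ σ X hρ hρtr hX l hl
end

section
/- Contraction bound for the non-unitary propagator: if V_t solves dV_t/dt = −i K_t V_t with V_0 = 1 and K_t − K_t† = −i L†L, then for every vector ψ, ‖V_t ψ‖² ≥ e^{−‖L‖² t}·‖ψ‖², hence V_t† V_t ≥ e^{−‖L‖² t}·1 and V_t V_t† ≥ e^{−‖L‖² t}·1 in the Loewner order. -/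
open Matrix
open scoped ComplexOrder

/-!
Along a solution `x_t = V_t ψ` of `x' = -i K_t x`, the anti-Hermitian part of `K_t` gives
`d/dt ‖x_t‖² = 2 Im ⟪x_t, K_t x_t⟫ = -‖L x_t‖² ≥ -‖L‖² ‖x_t‖²`, so `e^{‖L‖² t} ‖x_t‖²` is
nondecreasing. This is the bound `V_t† V_t ≥ e^{-‖L‖² t}`. It forces `V_t` to be invertible, and
writing `x = V_t y` the Cauchy–Schwarz inequality `‖x‖² = re ⟪y, V_t† x⟫ ≤ ‖y‖ ‖V_t† x‖` transfers
the same lower bound to `V_t†`, i.e. `V_t V_t† ≥ e^{-‖L‖² t}`.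
-/

open Complex ComplexConjugate

theorem exp_neg_mul_mul_le_of_hasDerivAt {f f' : ℝ → ℝ} {C : ℝ}
    (hf : ∀ u, HasDerivAt f (f' u) u) (hf' : ∀ u, -C * f u ≤ f' u) {a t : ℝ} (hat : a ≤ t) :
    Real.exp (-C * (t - a)) * f a ≤ f t := by
  set g : ℝ → ℝ := fun u => Real.exp (C * u) * f u
  have hg : ∀ u, HasDerivAt g (Real.exp (C * u) * (C * f u + f' u)) u := fun u => by
    refine (((hasDerivAt_id u).const_mul C).exp.mul (hf u)).congr_deriv ?_
    simp only [id, mul_one]; ring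
  have hg_mono : Monotone g := monotone_of_deriv_nonneg (fun u => (hg u).differentiableAt)
    fun u => (hg u).deriv ▸ mul_nonneg (Real.exp_pos _).le (by linarith [hf' u])
  have hexp : Real.exp (-C * (t - a)) = Real.exp (-C * t) * Real.exp (C * a) := by
    rw [← Real.exp_add]; ring_nf
  calc Real.exp (-C * (t - a)) * f a = Real.exp (-C * t) * g a := by rw [hexp, mul_assoc]
    _ ≤ Real.exp (-C * t) * g t := by gcongr; exact hg_mono hat
    _ = f t := by rw [← mul_assoc, ← Real.exp_add]; simp

section Dissipative

variable {E : Type*} [NormedAddCommGroup E] [InnerProductSpace ℂ E] [CompleteSpace E]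

theorem two_mul_re_inner_neg_I_smul_apply {K L : E →L[ℂ] E}
    (hKL : K - star K = (-I) • (star L * L)) (x : E) :
    2 * (inner ℂ x ((-I) • K x)).re = -‖L x‖ ^ 2 := by
  have h : inner ℂ x (K x) - conj (inner ℂ x (K x)) = -I * (‖L x‖ ^ 2 : ℝ) := by
    simpa [ContinuousLinearMap.star_eq_adjoint, inner_sub_right, inner_smul_right,
      ContinuousLinearMap.adjoint_inner_right, inner_self_eq_norm_sq_to_K]
      using congrArg (fun T : E →L[ℂ] E => inner ℂ x (T x)) hKL
  rw [sub_conj, neg_mul, mul_comm I, ← neg_mul, ← ofReal_neg] at h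
  rw [inner_smul_right, neg_mul, neg_re, I_mul_re, neg_neg]
  exact ofReal_injective (mul_right_cancel₀ I_ne_zero h)

theorem exp_neg_mul_norm_sq_le_norm_sq {K : ℝ → E →L[ℂ] E} {L : E →L[ℂ] E}
    (hKL : ∀ t, K t - star (K t) = (-I) • (star L * L)) {x : ℝ → E}
    (hx : ∀ t, HasDerivAt x ((-I) • K t (x t)) t) {a t : ℝ} (hat : a ≤ t) :
    Real.exp (-‖L‖ ^ 2 * (t - a)) * ‖x a‖ ^ 2 ≤ ‖x t‖ ^ 2 := by
  -- `HasDerivAt.norm_sq` differentiates through the real inner product `re ⟪·, ·⟫_ℂ`.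
  let := InnerProductSpace.complexToReal (G := E)
  refine exp_neg_mul_mul_le_of_hasDerivAt (f := fun u => ‖x u‖ ^ 2)
    (f' := fun u => -‖L (x u)‖ ^ 2) (fun u => ?_) (fun u => ?_) hat
  · simpa only [real_inner_eq_re_inner, RCLike.re_to_complex,
      two_mul_re_inner_neg_I_smul_apply (hKL u)] using (hx u).norm_sq
  · rw [neg_mul, neg_le_neg_iff, ← mul_pow]
    exact pow_le_pow_left₀ (norm_nonneg _) (L.le_opNorm _) 2

end Dissipative

open ContinuousLinearMap in
theorem mul_norm_sq_le_norm_adjoint_apply_sq {𝕜 E : Type*} [RCLike 𝕜] [NormedAddCommGroup E]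
    [InnerProductSpace 𝕜 E] [CompleteSpace E] [FiniteDimensional 𝕜 E] {T : E →L[𝕜] E} {c : ℝ}
    (hc : 0 < c) (hT : ∀ x, c * ‖x‖ ^ 2 ≤ ‖T x‖ ^ 2) (x : E) : c * ‖x‖ ^ 2 ≤ ‖adjoint T x‖ ^ 2 := by
  have hinj : Function.Injective T := (injective_iff_map_eq_zero T).2 fun y hy => by
    have := hT y
    rw [hy, norm_zero, zero_pow two_ne_zero] at this
    by_contra hy0
    linarith [mul_pos hc (pow_pos (norm_pos_iff.2 hy0) 2)]
  obtain ⟨y, rfl⟩ : ∃ y, T y = x :=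
    (LinearMap.injective_iff_surjective (f := (T : E →ₗ[𝕜] E))).1 hinj x
  have hCS : ‖T y‖ ^ 2 ≤ ‖y‖ * ‖adjoint T (T y)‖ := by
    rw [@norm_sq_eq_re_inner 𝕜, ← adjoint_inner_right]
    exact re_inner_le_norm _ _
  rcases (norm_nonneg (T y)).eq_or_lt with h0 | hpos
  · simp [← h0]
  refine le_of_mul_le_mul_right ?_ (pow_pos hpos 2)
  calc c * ‖T y‖ ^ 2 * ‖T y‖ ^ 2 = c * (‖T y‖ ^ 2) ^ 2 := by ring
    _ ≤ c * (‖y‖ * ‖adjoint T (T y)‖) ^ 2 := by gcongr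
    _ = c * ‖y‖ ^ 2 * ‖adjoint T (T y)‖ ^ 2 := by ring
    _ ≤ ‖T y‖ ^ 2 * ‖adjoint T (T y)‖ ^ 2 := by gcongr; exact hT y
    _ = ‖adjoint T (T y)‖ ^ 2 * ‖T y‖ ^ 2 := mul_comm _ _

theorem Matrix.posSemidef_conjTranspose_mul_self_sub_smul_one_of_le {𝕜 m : Type*} [RCLike 𝕜]
    [Fintype m] [DecidableEq m] {A : Matrix m m 𝕜} {c : ℝ}
    (hA : ∀ x, c * ‖x‖ ^ 2 ≤ ‖toEuclideanCLM (𝕜 := 𝕜) A x‖ ^ 2) :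
    (Aᴴ * A - (c : 𝕜) • 1).PosSemidef := by
  rw [← isPositive_toEuclideanLin_iff]
  refine ⟨isSymmetric_toEuclideanLin_iff.2 <| (isHermitian_conjTranspose_mul_self A).sub
    (isHermitian_one.smul (RCLike.conj_ofReal c)), fun x => ?_⟩
  rw [← coe_toEuclideanCLM_eq_toEuclideanLin, ← star_eq_conjTranspose, map_sub, map_mul,
    map_star, map_smul, map_one, ContinuousLinearMap.star_eq_adjoint, ContinuousLinearMap.coe_coe,
    _root_.sub_apply, mul_apply_eq_comp, _root_.smul_apply, one_apply_eq_self, inner_sub_left,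
    ContinuousLinearMap.adjoint_inner_left, inner_smul_real_left, map_sub, RCLike.smul_re,
    inner_self_eq_norm_sq, inner_self_eq_norm_sq, sub_nonneg]
  exact hA x

theorem Matrix.hasDerivAt_toEuclideanCLM_apply {𝕜 m : Type*} [RCLike 𝕜] [Fintype m]
    [DecidableEq m] {V : ℝ → Matrix m m 𝕜} {V' : Matrix m m 𝕜} {t : ℝ}
    (hV : ∀ i j, HasDerivAt (fun u => V u i j) (V' i j) t) (ψ : EuclideanSpace 𝕜 m) :
    HasDerivAt (fun u => toEuclideanCLM (𝕜 := 𝕜) (V u) ψ) (toEuclideanCLM (𝕜 := 𝕜) V' ψ) t := by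
  have : HasDerivAt (fun u => V u *ᵥ ψ.ofLp) (V' *ᵥ ψ.ofLp) t :=
    hasDerivAt_pi.2 fun i => HasDerivAt.fun_sum fun j _ => (hV i j).mul_const _
  exact (PiLp.continuousLinearEquiv 2 ℝ _).symm.hasFDerivAt.comp_hasDerivAt t this

theorem propagator_contraction_bound_general {n : ℕ}
    (K : ℝ → Matrix (Fin n) (Fin n) ℂ)
    (L : Matrix (Fin n) (Fin n) ℂ)
    (hKL : ∀ t, K t - (K t)ᴴ = (-Complex.I) • (Lᴴ * L))
    (V : ℝ → Matrix (Fin n) (Fin n) ℂ)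
    (hVderiv : ∀ t, ∀ i j : Fin n,
      HasDerivAt (fun u => V u i j) (((-Complex.I) • (K t * V t)) i j) t)
    (hV0 : V 0 = 1) :
    ∀ t : ℝ, 0 ≤ t →
      (∀ ψ : EuclideanSpace ℂ (Fin n),
        ‖Matrix.toEuclideanCLM (𝕜 := ℂ) (V t) ψ‖ ^ 2 ≥
          Real.exp (-(opNorm L) ^ 2 * t) * ‖ψ‖ ^ 2) ∧
      ((V t)ᴴ * V t - (Real.exp (-(opNorm L) ^ 2 * t) : ℂ) •
        (1 : Matrix (Fin n) (Fin n) ℂ)).PosSemidef ∧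
      (V t * (V t)ᴴ - (Real.exp (-(opNorm L) ^ 2 * t) : ℂ) •
        (1 : Matrix (Fin n) (Fin n) ℂ)).PosSemidef := by
  intro t ht
  let T := toEuclideanCLM (n := Fin n) (𝕜 := ℂ)
  have hKL' : ∀ u, T (K u) - star (T (K u)) = (-I) • (star (T L) * T L) := fun u => by
    simpa only [← star_eq_conjTranspose, map_sub, map_smul, map_mul, map_star]
      using congrArg T (hKL u)
  have hbound : ∀ ψ, Real.exp (-(opNorm L) ^ 2 * t) * ‖ψ‖ ^ 2 ≤ ‖T (V t) ψ‖ ^ 2 := fun ψ => by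
    have hx : ∀ u, HasDerivAt (fun u => T (V u) ψ) ((-I) • T (K u) (T (V u) ψ)) u := fun u =>
      hasDerivAt_toEuclideanCLM_apply (hVderiv u) ψ |>.congr_deriv <| by
        rw [map_smul, map_mul]; rfl
    simpa [hV0, T, opNorm] using exp_neg_mul_norm_sq_le_norm_sq hKL' hx ht
  have hadj : T (V t)ᴴ = ContinuousLinearMap.adjoint (T (V t)) := by
    rw [← star_eq_conjTranspose, map_star, ContinuousLinearMap.star_eq_adjoint]
  refine ⟨hbound, posSemidef_conjTranspose_mul_self_sub_smul_one_of_le hbound, ?_⟩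
  have := posSemidef_conjTranspose_mul_self_sub_smul_one_of_le (A := (V t)ᴴ) fun x =>
    hadj ▸ mul_norm_sq_le_norm_adjoint_apply_sq (Real.exp_pos _) hbound x
  rwa [conjTranspose_conjTranspose] at this

/-- Contraction bound for the non-unitary propagator: if `dV_t/dt = −iK_tV_t`, `V_0 = 1`
and `K_t − K_t† = −iL†L`, then `‖V_tψ‖² ≥ e^{−‖L‖²t}‖ψ‖²` for every `ψ`, hence
`V_t†V_t ≥ e^{−‖L‖²t}·1` and `V_tV_t† ≥ e^{−‖L‖²t}·1` in the Loewner order. -/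
theorem propagator_contraction_bound {n : ℕ}
    (K : ℝ → Matrix (Fin n) (Fin n) ℂ)
    (hKcont : ∀ i j : Fin n, Continuous fun t => K t i j)
    (L : Matrix (Fin n) (Fin n) ℂ)
    (hKL : ∀ t, K t - (K t)ᴴ = (-Complex.I) • (Lᴴ * L))
    (V : ℝ → Matrix (Fin n) (Fin n) ℂ)
    (hVderiv : ∀ t, ∀ i j : Fin n,
      HasDerivAt (fun u => V u i j) (((-Complex.I) • (K t * V t)) i j) t)
    (hV0 : V 0 = 1) :
    ∀ t : ℝ, 0 ≤ t →
      (∀ ψ : EuclideanSpace ℂ (Fin n),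
        ‖Matrix.toEuclideanCLM (𝕜 := ℂ) (V t) ψ‖ ^ 2 ≥
          Real.exp (-(opNorm L) ^ 2 * t) * ‖ψ‖ ^ 2) ∧
      ((V t)ᴴ * V t - (Real.exp (-(opNorm L) ^ 2 * t) : ℂ) •
        (1 : Matrix (Fin n) (Fin n) ℂ)).PosSemidef ∧
      (V t * (V t)ᴴ - (Real.exp (-(opNorm L) ^ 2 * t) : ℂ) •
        (1 : Matrix (Fin n) (Fin n) ℂ)).PosSemidef :=
  propagator_contraction_bound_general K L hKL V hVderiv hV0
end
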